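/- Let G and Y be finite sets with |G| = n_G and |Y| = n_Y, where n_Y divides n_G and n_Y ≥ 2. Let a : G → ℝ and b : Y → ℝ, fix y ∈ Y and a subset F ⊆ G with |F| = n_G / n_Y. Suppose: (i) |a(g) + b(y')| ≤ δ for all g ∈ F and all y' ≠ y; (ii) |a(g') + b(y)| ≤ δ for all g' ∉ F; (iii) ∑_{g ∈ G} a(g) = ∑_{y' ∈ Y} b(y'); and (iv) |a(g1) − a(g2)| ≤ δ for all g1, g2 ∈ F. Then for every g ∈ F, |(1 + (n_G/n_Y)(n_Y − 1)) · b(y) − (n_Y − 1 + n_G/n_Y) · a(g)| ≤ C · n_G · δ for some absolute constant C. -/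

import Mathlib

/-!
Split `∑ a = ∑ b` as `∑_F a + ∑_{Fᶜ} a = b y + ∑_{y' ≠ y} b y'`. Then
`(1 + |Fᶜ|) b y - (n_Y - 1 + |F|) a g` is exactly the sum of the three error terms
`∑_F (a g' - a g)`, `-∑_{y' ≠ y} (a g + b y')` and `∑_{Fᶜ} (a g' + b y)`, with
`|F| + (n_Y - 1) + |Fᶜ| ≤ 2 n_G` summands, each of size at most `δ`. For a fiber,
`|F| = n_G / n_Y` and `|Fᶜ| = (n_G / n_Y)(n_Y - 1)`.
-/

open Finset

theorem Finset.abs_sum_le_card_mul {ι R : Type*} [Ring R] [LinearOrder R] [IsOrderedRing R]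
    (s : Finset ι) {f : ι → R} {δ : R}
    (h : ∀ i ∈ s, |f i| ≤ δ) : |∑ i ∈ s, f i| ≤ #s * δ := by
  calc |∑ i ∈ s, f i| ≤ ∑ i ∈ s, |f i| := abs_sum_le_sum_abs f s
    _ ≤ #s • δ := sum_le_card_nsmul s _ δ h
    _ = #s * δ := nsmul_eq_mul _ _

section FeatureRatio

variable {G Y R : Type*} [Fintype G] [Fintype Y] [DecidableEq G] [DecidableEq Y]
  [CommRing R] (a : G → R) (b : Y → R) (y : Y) (F : Finset G) (g : G)

theorem feature_ratio_eq_sum_errors (hsum : ∑ g', a g' = ∑ y', b y') :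
    (1 + #Fᶜ) * b y - (#(univ.erase y) + #F) * a g
      = ∑ g' ∈ F, (a g' - a g) - ∑ y' ∈ univ.erase y, (a g + b y')
        + ∑ g' ∈ Fᶜ, (a g' + b y) := by
  have hsplit : ∑ g' ∈ F, a g' + ∑ g' ∈ Fᶜ, a g' = b y + ∑ y' ∈ univ.erase y, b y' := by
    rw [sum_add_sum_compl, add_sum_erase _ _ (mem_univ y), hsum]
  simp only [sum_sub_distrib, sum_add_distrib, sum_const, nsmul_eq_mul]
  linear_combination -hsplit

theorem abs_feature_ratio_le [LinearOrder R] [IsOrderedRing R] {δ : R}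
    (hcancel : ∀ y' ≠ y, |a g + b y'| ≤ δ)
    (hcompl : ∀ g' ∉ F, |a g' + b y| ≤ δ)
    (hsum : ∑ g', a g' = ∑ y', b y')
    (hfiber : ∀ g' ∈ F, |a g' - a g| ≤ δ) :
    |(1 + #Fᶜ) * b y - (#(univ.erase y) + #F) * a g|
      ≤ (#F + #(univ.erase y) + #Fᶜ) * δ := by
  rw [feature_ratio_eq_sum_errors a b y F g hsum]
  calc _ ≤ |∑ g' ∈ F, (a g' - a g) - ∑ y' ∈ univ.erase y, (a g + b y')|
          + |∑ g' ∈ Fᶜ, (a g' + b y)| := abs_add_le _ _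
    _ ≤ |∑ g' ∈ F, (a g' - a g)| + |∑ y' ∈ univ.erase y, (a g + b y')|
          + |∑ g' ∈ Fᶜ, (a g' + b y)| := by gcongr; exact abs_sub _ _
    _ ≤ #F * δ + #(univ.erase y) * δ + #Fᶜ * δ := by
      gcongr
      · exact abs_sum_le_card_mul F hfiber
      · exact abs_sum_le_card_mul _ fun y' hy' => hcancel y' (ne_of_mem_erase hy')
      · exact abs_sum_le_card_mul Fᶜ fun g' hg' => hcompl g' (mem_compl.mp hg')
    _ = _ := by ring

end FeatureRatio

/-- Asymmetric feature ratio in the symmetry-group case: there is an absolute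
constant `C` such that for any fiber `F` of size `n_G / n_Y`, cancellation of
confounding features, the equal-sum constraint, and near-equality within the
fiber force the ratio `C_α = (1 + (n_G/n_Y)(n_Y−1)) / ((n_Y−1) + n_G/n_Y)`
between `b y` and `a g` up to error `C · n_G · δ`. -/
theorem stmt_5 : ∃ C : ℝ, 0 < C ∧
    ∀ (G Y : Type) [Fintype G] [Fintype Y] (nG nY : ℕ),
      Fintype.card G = nG → Fintype.card Y = nY → nY ∣ nG → 2 ≤ nY →
      ∀ (a : G → ℝ) (b : Y → ℝ) (y : Y) (F : Finset G) (δ : ℝ), 0 ≤ δ →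
      F.card = nG / nY →
      (∀ g ∈ F, ∀ y' : Y, y' ≠ y → |a g + b y'| ≤ δ) →
      (∀ g' : G, g' ∉ F → |a g' + b y| ≤ δ) →
      (∑ g : G, a g = ∑ y' : Y, b y') →
      (∀ g1 ∈ F, ∀ g2 ∈ F, |a g1 - a g2| ≤ δ) →
      ∀ g ∈ F,
        |(1 + ((nG : ℝ) / nY) * ((nY : ℝ) - 1)) * b y
            - (((nY : ℝ) - 1) + (nG : ℝ) / nY) * a g| ≤ C * nG * δ := by
  refine ⟨2, two_pos, ?_⟩
  intro G Y _ _ nG nY hG hY hdvd hnY a b y F δ hδ hF hcancel hcompl hsum hfiber g hg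
  classical
  have hnY0 : (nY : ℝ) ≠ 0 := by positivity
  have hcardF : (#F : ℝ) = nG / nY := by
    rw [hF, Nat.cast_div hdvd hnY0]
  have hcardY : (#(univ.erase y) : ℝ) = nY - 1 := by
    rw [card_erase_of_mem (mem_univ y), card_univ, hY, Nat.cast_pred (by omega : 0 < nY)]
  have hcardFc : (#Fᶜ : ℝ) = nG / nY * (nY - 1) := by
    rw [card_compl, hG, Nat.cast_sub (hG ▸ F.card_le_univ), hcardF]
    field_simp
  have hnG : 0 < nG := hG ▸ Fintype.card_pos_iff.mpr ⟨g⟩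
  have hnYG : (nY : ℝ) ≤ nG := by exact_mod_cast Nat.le_of_dvd hnG hdvd
  have key := abs_feature_ratio_le a b y F g (hcancel g hg) hcompl hsum
    fun g' hg' => hfiber g' hg' g hg
  rw [hcardFc, hcardY, hcardF] at key
  have hfibers : (nG : ℝ) / nY + nG / nY * (nY - 1) = nG := by field_simp; ring
  refine key.trans (mul_le_mul_of_nonneg_right ?_ hδ)
  linarith
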